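/- arXiv:2205.00339 — 4 statements merged into one kernel-verified Lean document; each statement's English description precedes it below -/
import Mathlib

section
/- The Frobenius-optimal circulant approximation c(T) of an n×n Toeplitz matrix T = [a_{k-j}] — i.e. the circulant matrix minimizing ‖T − C‖_F over all circulant C — has first-column entries c_k = ((n−k) a_k + k a_{k−n})/n for k = 0, 1, …, n−1. -/
/-!
Entry `(i, j)` of `T - C` depends only on the cyclic diagonal `k = i - j mod n`: on the `n - k`
entries with `j ≤ i` it is `a_k - c_k`, on the other `k` entries it is `a_{k-n} - c_k`. Hence
`‖T - C‖_F²` splits into `n` independent problems, the `k`-th of which is minimised by the mean of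
`a_k` and `a_{k-n}` with weights `n - k` and `k`.
-/

open Matrix Finset

theorem norm_sub_sq_weighted_le_of_smul_eq {E : Type*} [NormedAddCommGroup E]
    [InnerProductSpace ℝ E] {p q : ℝ} (hp : 0 ≤ p) (hq : 0 ≤ q) {x y m : E}
    (hm : (p + q) • m = p • x + q • y) (t : E) :
    p * ‖x - m‖ ^ 2 + q * ‖y - m‖ ^ 2 ≤ p * ‖x - t‖ ^ 2 + q * ‖y - t‖ ^ 2 := by
  have hcross : p * inner ℝ (x - m) (m - t) + q * inner ℝ (y - m) (m - t) = 0 := by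
    rw [← real_inner_smul_left, ← real_inner_smul_left, ← inner_add_left, smul_sub, smul_sub,
      sub_add_sub_comm, ← hm, add_smul, sub_self, inner_zero_left]
  have hx : x - t = (x - m) + (m - t) := by abel
  have hy : y - t = (y - m) + (m - t) := by abel
  rw [hx, hy, norm_add_sq_real, norm_add_sq_real]
  nlinarith [mul_nonneg (add_nonneg hp hq) (sq_nonneg ‖m - t‖)]

theorem Fin.sum_ite_val_lt {M : Type*} [AddCommMonoid M] {n m : ℕ} (hm : m ≤ n) (A B : M) :
    ∑ j : Fin n, (if (j : ℕ) < m then A else B) = m • A + (n - m) • B := by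
  rw [sum_ite, Finset.sum_const, Finset.sum_const, filter_not,
    card_sdiff_of_subset (filter_subset _ _), Fin.card_filter_val_lt, card_univ,
    Fintype.card_fin, min_eq_right hm]

theorem Fin.intCast_val_add_sub {n : ℕ} (k j : Fin n) :
    (((k + j : Fin n) : ℕ) : ℤ) - (j : ℕ) =
      if (j : ℕ) < n - k then ((k : ℕ) : ℤ) else (k : ℤ) - n := by
  rw [Fin.val_add_eq_ite]
  split_ifs <;> omega

theorem Fin.sum_sum_sub_eq_sum_nsmul {M : Type*} [AddCommMonoid M] {n : ℕ} (f : Fin n → ℤ → M) :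
    ∑ i : Fin n, ∑ j : Fin n, f (i - j) ((i : ℕ) - (j : ℕ)) =
      ∑ k : Fin n, ((n - k) • f k (k : ℕ) + (k : ℕ) • f k ((k : ℤ) - n)) := by
  calc ∑ i : Fin n, ∑ j : Fin n, f (i - j) ((i : ℕ) - (j : ℕ))
      = ∑ j : Fin n, ∑ k : Fin n, f k (((k + j : Fin n) : ℕ) - (j : ℕ)) := by
        rw [sum_comm]
        refine sum_congr rfl fun j _ => ?_
        have : NeZero n := NeZero.of_pos j.pos
        rw [← Equiv.sum_comp (Equiv.addRight j)]
        simp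
    _ = ∑ k : Fin n, ((n - k) • f k (k : ℕ) + (k : ℕ) • f k ((k : ℤ) - n)) := by
        rw [sum_comm]
        refine sum_congr rfl fun k _ => ?_
        simp only [Fin.intCast_val_add_sub, apply_ite (f k)]
        rw [Fin.sum_ite_val_lt (Nat.sub_le _ _), Nat.sub_sub_self k.is_le']

theorem sum_sum_norm_toeplitz_sub_circulant_sq {E : Type*} [SeminormedAddCommGroup E] {n : ℕ}
    (a : ℤ → E) (u : Fin n → E) :
    ∑ i : Fin n, ∑ j : Fin n,
        ‖(of (fun k l : Fin n => a ((k.val : ℤ) - (l.val : ℤ))) - circulant u) i j‖ ^ 2 =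
      ∑ k : Fin n,
        (((n - k : ℕ) : ℝ) * ‖a k.val - u k‖ ^ 2 + (k : ℕ) * ‖a ((k : ℤ) - n) - u k‖ ^ 2) := by
  simpa only [Matrix.sub_apply, of_apply, circulant_apply, nsmul_eq_mul] using
    Fin.sum_sum_sub_eq_sum_nsmul fun k z => ‖a z - u k‖ ^ 2

theorem frobenius_optimal_circulant_general (n : ℕ) (a : ℤ → ℂ) :
    ∀ v : Fin n → ℂ,
      Real.sqrt (∑ i : Fin n, ∑ j : Fin n,
          ‖(Matrix.of (fun k l : Fin n => a ((k.val : ℤ) - (l.val : ℤ))) -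
            Matrix.circulant (fun k : Fin n =>
              (((n : ℂ) - k.val) * a k.val + (k.val : ℂ) * a ((k.val : ℤ) - n)) / n)) i j‖ ^ 2) ≤
      Real.sqrt (∑ i : Fin n, ∑ j : Fin n,
          ‖(Matrix.of (fun k l : Fin n => a ((k.val : ℤ) - (l.val : ℤ))) -
            Matrix.circulant v) i j‖ ^ 2) := by
  intro v
  refine Real.sqrt_le_sqrt ?_
  rw [sum_sum_norm_toeplitz_sub_circulant_sq, sum_sum_norm_toeplitz_sub_circulant_sq]
  refine sum_le_sum fun k _ =>
    norm_sub_sq_weighted_le_of_smul_eq (by positivity) (by positivity) ?_ _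
  have hn : (n : ℂ) ≠ 0 := Nat.cast_ne_zero.mpr k.pos.ne'
  simp only [Complex.real_smul]
  push_cast [Nat.cast_sub k.is_le']
  rw [sub_add_cancel, mul_div_cancel₀ _ hn]

/-- The Frobenius-optimal circulant approximation of an `n×n` Toeplitz matrix
`T = [a_{k-j}]`: the circulant with first-column entries
`c_k = ((n−k) a_k + k a_{k−n})/n` minimizes `‖T − C‖_F` over all circulant matrices `C`. -/
theorem frobenius_optimal_circulant (n : ℕ) (hn : 0 < n) (a : ℤ → ℂ) :
    ∀ v : Fin n → ℂ,
      Real.sqrt (∑ i : Fin n, ∑ j : Fin n,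
          ‖(Matrix.of (fun k l : Fin n => a ((k.val : ℤ) - (l.val : ℤ))) -
            Matrix.circulant (fun k : Fin n =>
              (((n : ℂ) - k.val) * a k.val + (k.val : ℂ) * a ((k.val : ℤ) - n)) / n)) i j‖ ^ 2) ≤
      Real.sqrt (∑ i : Fin n, ∑ j : Fin n,
          ‖(Matrix.of (fun k l : Fin n => a ((k.val : ℤ) - (l.val : ℤ))) -
            Matrix.circulant v) i j‖ ^ 2) :=
  frobenius_optimal_circulant_general n a
end

section
/- If the Fourier coefficients of f are absolutely summable, ∑_{k∈ℤ}|a_k| < ∞, with partial-sum tails ε_m = ∑_{|k|>m}|a_k|, then for every m < n/2 and every j, the j-th eigenvalue of the Frobenius-optimal circulant c(T_n(f)) satisfies |λ_j(c(T_n(f))) − f(2πj/n)| ≤ (∑_{k=0}^{m−1} ε_k + (n−m) ε_m)/n. -/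
open Complex

/-- The tail `ε_m = ∑_{|k|>m} |a_k|` of the absolute Fourier series. -/
noncomputable def fourierTail (a : ℤ → ℂ) (m : ℕ) : ℝ :=
  ∑' k : ℤ, if (m : ℤ) < |k| then ‖a k‖ else 0

/-!
The eigenvalue `λ_j` is the average over `l < n` of the sums `W_l` of the modulated coefficients
`a_k e^{2πijk/n}` over the windows `l - n + 1 ≤ k ≤ l`, so `λ_j - f(2πj/n)` is the average of
the errors `W_l - f(2πj/n)`. Each of these is bounded by the mass of `|a_k|` outside its window,
`∑_{k < l-n+1} + ∑_{k > l}`; reflecting `l ↦ n - 1 - l` in the first part, these bounds add up to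
`∑_{l<n} ε_l`, which is at most `∑_{l<m} ε_l + (n - m) ε_m` because `ε` is antitone.
-/

open Finset

theorem norm_sum_sub_tsum_le_tsum_indicator_compl {ι E : Type*} [NormedAddCommGroup E]
    [CompleteSpace E] {g : ι → E} (hg : Summable (‖g ·‖)) (s : Finset ι) :
    ‖∑ k ∈ s, g k - ∑' k, g k‖ ≤ ∑' k, (↑s : Set ι)ᶜ.indicator (‖g ·‖) k := by
  rw [norm_sub_rev, ← hg.of_norm.sum_add_tsum_subtype_compl s, add_sub_cancel_left,
    ← _root_.tsum_subtype]
  exact norm_tsum_le_tsum_norm (hg.subtype _)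

theorem norm_one_div_mul_sum_sub_le {𝕜 : Type*} [RCLike 𝕜] {n : ℕ} (hn : 0 < n)
    (x : Fin n → 𝕜) (c : 𝕜) :
    ‖1 / (n : 𝕜) * ∑ l, x l - c‖ ≤ 1 / n * ∑ l, ‖x l - c‖ := by
  have hn' : (n : 𝕜) ≠ 0 := by exact_mod_cast hn.ne'
  have : 1 / (n : 𝕜) * ∑ l, x l - c = 1 / n * ∑ l, (x l - c) := by
    rw [sum_sub_distrib, sum_const, card_univ, Fintype.card_fin, nsmul_eq_mul]
    field_simp
  rw [this, norm_mul, norm_div, norm_one, RCLike.norm_natCast]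
  gcongr
  exact norm_sum_le _ _

theorem Antitone.sum_range_le_sum_range_add_mul {ε : ℕ → ℝ} (hε : Antitone ε) (n m : ℕ) :
    ∑ l ∈ range n, ε l ≤ ∑ l ∈ range m, ε l + (n - m) * ε m := by
  rcases le_total m n with hmn | hnm
  · have : ∑ l ∈ Ico m n, ε l ≤ (n - m) * ε m := by
      simpa [Nat.cast_sub hmn] using sum_le_card_nsmul (Ico m n) ε (ε m)
        fun l hl ↦ hε (mem_Ico.mp hl).1
    rw [← sum_range_add_sum_Ico _ hmn]
    linarith
  · have : (m - n) * ε m ≤ ∑ l ∈ Ico n m, ε l := by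
      simpa [Nat.cast_sub hnm] using card_nsmul_le_sum (Ico n m) ε (ε m)
        fun l hl ↦ hε (mem_Ico.mp hl).2.le
    rw [← sum_range_add_sum_Ico _ hnm]
    linarith

noncomputable def upperTail (u : ℤ → ℝ) (q : ℤ) : ℝ := ∑' k, (Set.Ioi q).indicator u k

noncomputable def lowerTail (u : ℤ → ℝ) (p : ℤ) : ℝ := ∑' k, (Set.Iio p).indicator u k

section Tails

variable {u : ℤ → ℝ}

theorem tsum_indicator_compl_Icc_le (hu : Summable u) (hu0 : 0 ≤ u) (p q : ℤ) :
    ∑' k, (↑(Icc p q) : Set ℤ)ᶜ.indicator u k ≤ lowerTail u p + upperTail u q := by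
  rw [lowerTail, upperTail, ← (hu.indicator _).tsum_add (hu.indicator _)]
  refine (hu.indicator _).tsum_le_tsum (fun k ↦ ?_) ((hu.indicator _).add (hu.indicator _))
  have : 0 ≤ u k := hu0 k
  simp only [Set.indicator_apply, Set.mem_compl_iff, coe_Icc, Set.mem_Icc, Set.mem_Iio,
    Set.mem_Ioi]
  split_ifs <;> first | linarith | omega

theorem upperTail_antitone (hu : Summable u) (hu0 : 0 ≤ u) : Antitone (upperTail u) := by
  intro q r hqr
  refine (hu.indicator _).tsum_le_tsum (fun k ↦ ?_) (hu.indicator _)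
  exact Set.indicator_le_indicator_of_subset (Set.Ioi_subset_Ioi hqr) hu0 k

theorem lowerTail_monotone (hu : Summable u) (hu0 : 0 ≤ u) : Monotone (lowerTail u) := by
  intro p q hpq
  refine (hu.indicator _).tsum_le_tsum (fun k ↦ ?_) (hu.indicator _)
  exact Set.indicator_le_indicator_of_subset (Set.Iio_subset_Iio hpq) hu0 k

end Tails

section FourierTail

variable {a : ℤ → ℂ}

theorem fourierTail_eq_lowerTail_add_upperTail (hsum : Summable (‖a ·‖)) (m : ℕ) :
    fourierTail a m = lowerTail (‖a ·‖) (-m) + upperTail (‖a ·‖) m := by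
  rw [lowerTail, upperTail, ← (hsum.indicator _).tsum_add (hsum.indicator _), fourierTail]
  refine tsum_congr fun k ↦ ?_
  simp only [Set.indicator_apply, Set.mem_Iio, Set.mem_Ioi, lt_abs]
  split_ifs <;> first | (exfalso; omega) | simp

theorem fourierTail_antitone (hsum : Summable (‖a ·‖)) : Antitone (fourierTail a) := by
  intro m l hml
  have hml' : (m : ℤ) ≤ l := by exact_mod_cast hml
  rw [fourierTail_eq_lowerTail_add_upperTail hsum, fourierTail_eq_lowerTail_add_upperTail hsum]
  exact add_le_add (lowerTail_monotone hsum (fun _ ↦ norm_nonneg _) (neg_le_neg hml'))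
    (upperTail_antitone hsum (fun _ ↦ norm_nonneg _) hml')

theorem sum_range_lowerTail_add_upperTail (hsum : Summable (‖a ·‖)) (n : ℕ) :
    ∑ l ∈ range n, (lowerTail (‖a ·‖) (l - n + 1) + upperTail (‖a ·‖) l) =
      ∑ l ∈ range n, fourierTail a l := by
  have hreflect : ∑ l ∈ range n, lowerTail (‖a ·‖) (l - n + 1) =
      ∑ l ∈ range n, lowerTail (‖a ·‖) (-l) := by
    rw [← sum_range_reflect (fun l : ℕ ↦ lowerTail (‖a ·‖) (-l))]
    refine sum_congr rfl fun l hl ↦ congrArg _ ?_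
    have := mem_range.mp hl
    omega
  simp only [sum_add_distrib, hreflect, fourierTail_eq_lowerTail_add_upperTail hsum]

end FourierTail

theorem frobenius_optimal_circulant_eigenvalue_error_general (n : ℕ) (hn : 0 < n) (a : ℤ → ℂ)
    (hsum : Summable (fun k : ℤ => ‖a k‖))
    (m : ℕ) (j : Fin n) :
    ‖((1 / (n : ℂ)) * ∑ l : Fin n, ∑ k ∈ Finset.Icc ((l.val : ℤ) - n + 1) (l.val : ℤ),
            a k * Complex.exp (2 * Real.pi * I * j.val * k / n)
          - ∑' k : ℤ, a k * Complex.exp (I * k * (2 * Real.pi * j.val / n)))‖ ≤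
      ((∑ k ∈ Finset.range m, fourierTail a k) + ((n : ℝ) - m) * fourierTail a m) / n := by
  set g : ℤ → ℂ := fun k ↦ a k * exp (2 * Real.pi * I * j.val * k / n)
  have hg : (‖g ·‖) = (‖a ·‖) := funext fun k ↦ by
    simp [g, Complex.norm_exp]
  have hS : ∑' k : ℤ, a k * exp (I * k * (2 * Real.pi * j.val / n)) = ∑' k, g k :=
    tsum_congr fun k ↦ by simp only [g]; ring_nf
  have hwindow (l : ℕ) : ‖∑ k ∈ Icc ((l : ℤ) - n + 1) l, g k - ∑' k, g k‖ ≤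
      lowerTail (‖a ·‖) (l - n + 1) + upperTail (‖a ·‖) l := by
    refine (norm_sum_sub_tsum_le_tsum_indicator_compl (hg ▸ hsum) _).trans ?_
    rw [hg]
    exact tsum_indicator_compl_Icc_le hsum (fun _ ↦ norm_nonneg _) _ _
  rw [hS]
  calc _ ≤ 1 / n * ∑ l : Fin n, ‖∑ k ∈ Icc ((l : ℤ) - n + 1) l, g k - ∑' k, g k‖ :=
        norm_one_div_mul_sum_sub_le hn _ _
    _ ≤ 1 / n * ∑ l : Fin n, (lowerTail (‖a ·‖) (l - n + 1) + upperTail (‖a ·‖) l) := by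
        gcongr with l; exact hwindow l
    _ = 1 / n * ∑ l ∈ range n, fourierTail a l := by
        rw [Fin.sum_univ_eq_sum_range
            (fun l ↦ lowerTail (‖a ·‖) (l - n + 1) + upperTail (‖a ·‖) l),
          sum_range_lowerTail_add_upperTail hsum]
    _ ≤ 1 / n * (∑ k ∈ range m, fourierTail a k + (n - m) * fourierTail a m) := by
        gcongr
        exact (fourierTail_antitone hsum).sum_range_le_sum_range_add_mul n m
    _ = _ := one_div_mul_eq_div _ _

/-- If `∑_{k∈ℤ}|a_k| < ∞` with tails `ε_m = ∑_{|k|>m}|a_k|`, then for every `m < n/2` and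
every `j`, the `j`-th eigenvalue `λ_j = (1/n)∑_{l=0}^{n−1}∑_{k=−n+1+l}^{l} a_k e^{2πijk/n}`
of the Frobenius-optimal circulant `c(T_n(f))` satisfies
`|λ_j − f(2πj/n)| ≤ (∑_{k=0}^{m−1} ε_k + (n−m) ε_m)/n`, where `f(θ) = ∑_k a_k e^{ikθ}`. -/
theorem frobenius_optimal_circulant_eigenvalue_error (n : ℕ) (hn : 0 < n) (a : ℤ → ℂ)
    (hsum : Summable (fun k : ℤ => ‖a k‖))
    (m : ℕ) (hm : 2 * m < n) (j : Fin n) :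
    ‖((1 / (n : ℂ)) * ∑ l : Fin n, ∑ k ∈ Finset.Icc ((l.val : ℤ) - n + 1) (l.val : ℤ),
            a k * Complex.exp (2 * Real.pi * I * j.val * k / n)
          - ∑' k : ℤ, a k * Complex.exp (I * k * (2 * Real.pi * j.val / n)))‖ ≤
      ((∑ k ∈ Finset.range m, fourierTail a k) + ((n : ℝ) - m) * fourierTail a m) / n :=
  frobenius_optimal_circulant_eigenvalue_error_general n hn a hsum m j
end

section
/- Let α ∈ (1,2) and g_k^{(α)} = (−1)^k C(α,k). Then every partial sum with at least two terms is negative: ∑_{k=0}^{n} g_k^{(α)} < 0 for all n ≥ 1, and the absolute series sums to ∑_{k=0}^∞ |g_k^{(α)}| = 2α. -/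
/-!
Pascal's rule gives the telescoping identity `∑_{k ≤ n} g_k^{(α)} = g_n^{(α-1)}`, so the partial
sums are coefficients of order `β = α - 1 ∈ (0,1)`. These are negative for `n ≥ 1`, since
`g_{n+1}^{(β)} = g_n^{(β)} (n - β)/(n + 1)`, and `n |g_n^{(β)}|` is non-increasing, so they tend to `0`.
As `g_1^{(α)} = -α` is the only negative coefficient, the partial sums of `|g_k^{(α)}|` exceed
those of `g_k^{(α)}` by `2α` and hence tend to `2α`.
-/

open Finset Filter

/-- The fractional binomial coefficients
`g_k^{(α)} = (−1)^k C(α,k) = ((−1)^k/k!) α(α−1)⋯(α−k+1)`. -/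
noncomputable def fracBinom (α : ℝ) (k : ℕ) : ℝ :=
  (-1) ^ k / (Nat.factorial k) * ∏ i ∈ Finset.range k, (α - i)

@[simp]
lemma fracBinom_zero (α : ℝ) : fracBinom α 0 = 1 := by simp [fracBinom]

@[simp]
lemma fracBinom_one (α : ℝ) : fracBinom α 1 = -α := by simp [fracBinom]

lemma fracBinom_succ (α : ℝ) (k : ℕ) :
    fracBinom α (k + 1) = fracBinom α k * ((k - α) / (k + 1)) := by
  have hk : (k.factorial : ℝ) ≠ 0 := by positivity
  unfold fracBinom
  rw [prod_range_succ, Nat.factorial_succ]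
  push_cast
  field_simp
  ring

lemma fracBinom_sub_one_succ (α : ℝ) (n : ℕ) :
    fracBinom (α - 1) (n + 1) = fracBinom (α - 1) n + fracBinom α (n + 1) := by
  have hP : ∏ i ∈ range n, (α - ↑(i + 1)) = ∏ i ∈ range n, (α - 1 - i) :=
    prod_congr rfl fun i _ => by push_cast; ring
  have hn : (n.factorial : ℝ) ≠ 0 := by positivity
  unfold fracBinom
  rw [prod_range_succ' (fun i : ℕ => α - i), hP, prod_range_succ, Nat.factorial_succ]
  push_cast
  field_simp
  ring

lemma sum_range_succ_fracBinom (α : ℝ) (n : ℕ) :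
    ∑ k ∈ range (n + 1), fracBinom α k = fracBinom (α - 1) n := by
  induction n with
  | zero => simp
  | succ n ih => rw [sum_range_succ, ih, fracBinom_sub_one_succ]

lemma fracBinom_neg {β : ℝ} (hβ₀ : 0 < β) (hβ₁ : β < 1) {n : ℕ} (hn : 1 ≤ n) :
    fracBinom β n < 0 := by
  induction n, hn using Nat.le_induction with
  | base => simpa using hβ₀
  | succ n hn ih =>
    have hn' : (1 : ℝ) ≤ n := by exact_mod_cast hn
    rw [fracBinom_succ]
    exact mul_neg_of_neg_of_pos ih (div_pos (by linarith) (by positivity))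

lemma fracBinom_nonneg {α : ℝ} (h₁ : 1 ≤ α) (h₂ : α ≤ 2) {k : ℕ} (hk : 2 ≤ k) :
    0 ≤ fracBinom α k := by
  induction k, hk using Nat.le_induction with
  | base =>
    rw [show 2 = 1 + 1 from rfl, fracBinom_succ, fracBinom_one]
    exact mul_nonneg_of_nonpos_of_nonpos (by linarith)
      (div_nonpos_of_nonpos_of_nonneg (by push_cast; linarith) (by positivity))
  | succ k hk ih =>
    have hk' : (2 : ℝ) ≤ k := by exact_mod_cast hk
    rw [fracBinom_succ]
    exact mul_nonneg ih (div_nonneg (by linarith) (by positivity))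

lemma succ_mul_abs_fracBinom_succ_le {β : ℝ} (hβ₀ : 0 ≤ β) (hβ₂ : β ≤ 2) (n : ℕ) :
    (n + 1) * |fracBinom β (n + 1)| ≤ β := by
  induction n with
  | zero => simp [abs_of_nonneg hβ₀]
  | succ n ih =>
    have hn : (0 : ℝ) ≤ n := n.cast_nonneg
    push_cast at ih ⊢
    calc (n + 1 + 1) * |fracBinom β (n + 1 + 1)| = |n + 1 - β| * |fracBinom β (n + 1)| := by
          rw [fracBinom_succ, abs_mul, abs_div]
          push_cast
          rw [abs_of_pos (by positivity : (0 : ℝ) < n + 1 + 1)]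
          field_simp
      _ ≤ (n + 1) * |fracBinom β (n + 1)| := by
          gcongr
          exact abs_le.mpr ⟨by linarith, by linarith⟩
      _ ≤ β := ih

lemma tendsto_fracBinom_atTop_zero {β : ℝ} (hβ₀ : 0 ≤ β) (hβ₂ : β ≤ 2) :
    Tendsto (fracBinom β) atTop (nhds 0) := by
  rw [← tendsto_add_atTop_iff_nat 1]
  refine squeeze_zero_norm (a := fun n : ℕ => β * (1 / (n + 1))) (fun n => ?_)
    (by simpa using tendsto_one_div_add_atTop_nhds_zero_nat.const_mul β)
  rw [Real.norm_eq_abs, mul_one_div, le_div_iff₀ (by positivity), mul_comm]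
  exact_mod_cast succ_mul_abs_fracBinom_succ_le hβ₀ hβ₂ n

lemma sum_range_add_two_abs_fracBinom {α : ℝ} (h₁ : 1 ≤ α) (h₂ : α ≤ 2) (n : ℕ) :
    ∑ k ∈ range (n + 2), |fracBinom α k| = fracBinom (α - 1) (n + 1) + 2 * α := by
  have habs : ∀ k ∈ range n, |fracBinom α (k + 2)| = fracBinom α (k + 2) := fun k _ =>
    abs_of_nonneg (fracBinom_nonneg h₁ h₂ (by omega))
  rw [← sum_range_succ_fracBinom, sum_range_succ', sum_range_succ',
    sum_range_succ' _ (n + 1), sum_range_succ', sum_congr rfl habs]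
  simp only [zero_add, fracBinom_one, abs_neg, abs_of_nonneg (by linarith : 0 ≤ α), fracBinom_zero,
    abs_one]
  ring

/-- For `α ∈ (1,2)`: every partial sum with at least two terms is negative,
`∑_{k=0}^{n} g_k^{(α)} < 0` for all `n ≥ 1`, and `∑_{k=0}^∞ |g_k^{(α)}| = 2α`. -/
theorem fracBinom_partial_sums_neg_and_abs_sum (α : ℝ) (hα : α ∈ Set.Ioo (1 : ℝ) 2) :
    (∀ n : ℕ, 1 ≤ n → ∑ k ∈ Finset.range (n + 1), fracBinom α k < 0) ∧
    HasSum (fun k : ℕ => |fracBinom α k|) (2 * α) := by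
  obtain ⟨h₁, h₂⟩ := hα
  refine ⟨fun n hn => ?_, ?_⟩
  · rw [sum_range_succ_fracBinom]
    exact fracBinom_neg (by linarith) (by linarith) hn
  · rw [hasSum_iff_tendsto_nat_of_nonneg (fun k => abs_nonneg _), ← tendsto_add_atTop_iff_nat 2]
    simp_rw [sum_range_add_two_abs_fracBinom h₁.le h₂.le]
    have h := ((tendsto_fracBinom_atTop_zero (β := α - 1) (by linarith) (by linarith)).comp
      (tendsto_add_atTop_nat 1)).add_const (2 * α)
    rwa [zero_add] at h
end

section
/- For α ∈ (1,2), the function p_α(θ) = g_α(θ) + conj(g_α(θ)) with g_α(θ) = −e^{−iθ}(1 − e^{iθ})^α is real, nonnegative on [−π,π], even, and has a zero of order exactly α at θ = 0: there exist constants 0 < C₁ ≤ C₂ < ∞ with C₁ = liminf_{θ→0} p_α(θ)/|θ|^α and C₂ = limsup_{θ→0} p_α(θ)/|θ|^α; moreover, lim_{θ→0} p_α(θ)/|θ|^α exists and is a positive finite constant. -/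
open Complex Filter

/-- `g_α(θ) = −e^{−iθ}(1 − e^{iθ})^α` (principal branch of the complex power). -/
noncomputable def gAlpha (α : ℝ) (θ : ℝ) : ℂ :=
  -Complex.exp (-(θ * I)) * (1 - Complex.exp (θ * I)) ^ (α : ℂ)

/-- `p_α(θ) = g_α(θ) + conj(g_α(θ)) = 2 Re g_α(θ)`. -/
noncomputable def pAlpha (α : ℝ) (θ : ℝ) : ℝ := 2 * (gAlpha α θ).re

lemma one_sub_exp (θ : ℝ) :
    (1 : ℂ) - Complex.exp (θ * I) =
      ((2 * Real.sin (θ / 2) : ℝ) : ℂ) * Complex.exp ((((θ - Real.pi) / 2 : ℝ) : ℂ) * I) := by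
  have hw : Complex.exp ((θ:ℂ) * I) = Complex.exp ((θ/2 : ℂ) * I) ^ 2 := by
    rw [← Complex.exp_nat_mul]; ring_nf
  have hpi : Complex.exp ((((θ - Real.pi) / 2 : ℝ) : ℂ) * I)
      = Complex.exp ((θ/2 : ℂ) * I) * Complex.exp (-(Real.pi/2 : ℂ) * I) := by
    rw [← Complex.exp_add]; push_cast; ring_nf
  have hI : Complex.exp (-(Real.pi/2 : ℂ) * I) = -I := by
    rw [Complex.exp_mul_I]
    simp [Complex.cos_neg, Complex.sin_neg, Complex.cos_pi_div_two, Complex.sin_pi_div_two]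
  rw [hw, hpi, hI]
  push_cast
  rw [Complex.sin]
  have hne : Complex.exp ((θ/2 : ℂ) * I) ≠ 0 := Complex.exp_ne_zero _
  have hinv : Complex.exp (-((θ:ℂ)/2) * I) = (Complex.exp (((θ:ℂ)/2) * I))⁻¹ := by
    rw [← Complex.exp_neg]; congr 1; ring
  rw [hinv]
  field_simp
  ring_nf
  rw [Complex.I_sq]
  ring

lemma pAlpha_formula (α : ℝ) {θ : ℝ} (h0 : 0 < θ) (hπ : θ ≤ Real.pi) :
    pAlpha α θ = -2 * (2 * Real.sin (θ / 2)) ^ α *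
      Real.cos ((θ - Real.pi) / 2 * α - θ) := by
  have hpi := Real.pi_pos
  have hr : 0 < 2 * Real.sin (θ / 2) := by
    have := Real.sin_pos_of_pos_of_lt_pi (x := θ/2) (by linarith) (by linarith)
    linarith
  set r := 2 * Real.sin (θ / 2) with hrdef
  set φ := (θ - Real.pi) / 2 with hφdef
  have hz : (1 : ℂ) - Complex.exp (θ * I) = (r : ℂ) * Complex.exp ((φ : ℂ) * I) :=
    one_sub_exp θ
  have habs : ‖(1:ℂ) - Complex.exp (θ * I)‖ = r := by
    rw [hz, norm_mul, Complex.norm_real, Real.norm_eq_abs, Complex.norm_exp_ofReal_mul_I, abs_of_pos hr, mul_one]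
  have hne : (1:ℂ) - Complex.exp (θ * I) ≠ 0 := by
    intro h; rw [h] at habs; simp at habs; linarith
  have harg : Complex.arg ((1:ℂ) - Complex.exp (θ * I)) = φ := by
    rw [hz, Complex.arg_real_mul _ hr, Complex.exp_mul_I]
    exact Complex.arg_cos_add_sin_mul_I ⟨by rw [hφdef]; linarith, by rw [hφdef]; linarith⟩
  have hcpow : ((1:ℂ) - Complex.exp (θ * I)) ^ (α : ℂ) =
      Complex.exp (Complex.log (1 - Complex.exp (θ * I)) * α) :=
    Complex.cpow_def_of_ne_zero hne _
  have hg : gAlpha α θ =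
      -Complex.exp (Complex.log (1 - Complex.exp (θ * I)) * α - θ * I) := by
    rw [gAlpha, hcpow, neg_mul, ← Complex.exp_add]
    congr 2; ring
  have hre : (Complex.log (1 - Complex.exp (θ * I)) * α - θ * I).re = Real.log r * α := by
    simp [Complex.log_re, habs]
  have him : (Complex.log (1 - Complex.exp (θ * I)) * α - θ * I).im = φ * α - θ := by
    simp [Complex.log_im, harg]
  rw [pAlpha, hg]
  rw [Complex.neg_re, Complex.exp_re, hre, him]
  rw [← Real.rpow_def_of_pos hr]
  ring

lemma gAlpha_neg (α θ : ℝ) : gAlpha α (-θ) = (starRingEnd ℂ) (gAlpha α θ) := by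
  have harg : (1 - Complex.exp (θ * I)).arg ≠ Real.pi := by
    intro h
    have := (Complex.arg_eq_pi_iff.mp h).1
    have hre : (1 - Complex.exp ((θ:ℂ) * I)).re = 1 - Real.cos θ := by
      simp [Complex.exp_ofReal_mul_I_re]
    rw [hre] at this
    nlinarith [Real.cos_le_one θ]
  have hconjx : (starRingEnd ℂ) (1 - Complex.exp (θ * I)) = 1 - Complex.exp (-θ * I) := by
    rw [map_sub, map_one, ← Complex.exp_conj]
    congr 2
    simp [Complex.conj_I]
  have h := Complex.conj_cpow (1 - Complex.exp (θ * I)) α harg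
  rw [Complex.conj_ofReal] at h
  rw [gAlpha, gAlpha, map_mul, map_neg, ← Complex.exp_conj, ← h, hconjx]
  congr 2
  · simp [Complex.conj_I]
  · push_cast; ring_nf

lemma pAlpha_neg (α θ : ℝ) : pAlpha α (-θ) = pAlpha α θ := by
  rw [pAlpha, pAlpha, gAlpha_neg]
  simp

lemma tendsto_sin_div :
    Tendsto (fun x : ℝ => Real.sin x / x) (nhdsWithin 0 {x | x ≠ 0}) (nhds 1) := by
  have h := Real.hasDerivAt_sin 0
  rw [hasDerivAt_iff_tendsto_slope] at h
  have hset : {x : ℝ | x ≠ 0} = {(0:ℝ)}ᶜ := by ext; simp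
  rw [hset]
  simpa [slope_fun_def, Real.cos_zero, div_eq_inv_mul] using h

lemma tendsto_right (α : ℝ) (hα : α ∈ Set.Ioo (1 : ℝ) 2) :
    Tendsto (fun θ : ℝ => pAlpha α θ / |θ| ^ α) (nhdsWithin 0 (Set.Ioi 0))
      (nhds (-2 * Real.cos (-Real.pi / 2 * α))) := by
  have hpi := Real.pi_pos
  have hhalf : Tendsto (fun θ : ℝ => θ / 2) (nhdsWithin (0:ℝ) (Set.Ioi 0))
      (nhdsWithin 0 {x | x ≠ 0}) := by
    apply tendsto_nhdsWithin_of_tendsto_nhds_of_eventually_within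
    · have := (continuous_id.div_const (2:ℝ)).tendsto 0
      simp only [id] at this
      norm_num at this
      exact this.mono_left nhdsWithin_le_nhds
    · filter_upwards [self_mem_nhdsWithin] with θ (hθ : 0 < θ)
      exact (by positivity : (0:ℝ) < θ/2).ne'
  have h1 : Tendsto (fun θ : ℝ => 2 * Real.sin (θ / 2) / θ)
      (nhdsWithin 0 (Set.Ioi 0)) (nhds 1) := by
    have := tendsto_sin_div.comp hhalf
    apply this.congr'
    filter_upwards [self_mem_nhdsWithin] with θ (hθ : 0 < θ)
    have : θ ≠ 0 := ne_of_gt hθ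
    simp only [Function.comp_apply]
    field_simp
  have h2 : Tendsto (fun θ : ℝ => (2 * Real.sin (θ / 2) / θ) ^ α)
      (nhdsWithin 0 (Set.Ioi 0)) (nhds 1) := by
    have hc : ContinuousAt (fun x : ℝ => x ^ α) 1 :=
      Real.continuousAt_rpow_const 1 α (Or.inl one_ne_zero)
    have := hc.tendsto.comp h1
    simpa [Real.one_rpow, Function.comp_def] using this
  have h3 : Tendsto (fun θ : ℝ => Real.cos ((θ - Real.pi) / 2 * α - θ))
      (nhdsWithin 0 (Set.Ioi 0)) (nhds (Real.cos (-Real.pi / 2 * α))) := by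
    have hc : Continuous fun θ : ℝ => Real.cos ((θ - Real.pi) / 2 * α - θ) := by continuity
    have := (hc.tendsto 0).mono_left (nhdsWithin_le_nhds (s := Set.Ioi (0:ℝ)))
    convert this using 3
    norm_num
  have hmain : Tendsto (fun θ : ℝ => -2 * (2 * Real.sin (θ / 2) / θ) ^ α *
      Real.cos ((θ - Real.pi) / 2 * α - θ)) (nhdsWithin 0 (Set.Ioi 0))
      (nhds (-2 * Real.cos (-Real.pi / 2 * α))) := by
    have := ((h2.const_mul (-2)).mul h3)
    simpa using this
  apply hmain.congr'
  have hmem : Set.Ioo (0:ℝ) Real.pi ∈ nhdsWithin (0:ℝ) (Set.Ioi 0) :=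
    Ioo_mem_nhdsGT_of_mem ⟨le_refl 0, hpi⟩
  filter_upwards [hmem] with θ hθ
  obtain ⟨h0, hπ⟩ := hθ
  rw [pAlpha_formula α h0 hπ.le, abs_of_pos h0]
  have hs : 0 ≤ 2 * Real.sin (θ / 2) := by
    have := Real.sin_nonneg_of_nonneg_of_le_pi (x := θ/2) (by linarith) (by linarith)
    linarith
  rw [Real.div_rpow hs h0.le]
  have hθα : (0:ℝ) < θ ^ α := Real.rpow_pos_of_pos h0 α
  field_simp

/-- For `α ∈ (1,2)`, `p_α = g_α + conj g_α` is real, nonnegative on `[−π,π]`, even, and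
has a zero of order exactly `α` at `θ = 0`: the quotient `p_α(θ)/|θ|^α` tends (for
`θ → 0`, `θ ≠ 0`) to a positive finite constant. -/
theorem pAlpha_zero_of_order_alpha (α : ℝ) (hα : α ∈ Set.Ioo (1 : ℝ) 2) :
    (∀ θ : ℝ, (gAlpha α θ + (starRingEnd ℂ) (gAlpha α θ)).im = 0) ∧
    (∀ θ : ℝ, θ ∈ Set.Icc (-Real.pi) Real.pi → 0 ≤ pAlpha α θ) ∧
    (∀ θ : ℝ, pAlpha α (-θ) = pAlpha α θ) ∧
    (∃ C : ℝ, 0 < C ∧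
      Tendsto (fun θ : ℝ => pAlpha α θ / |θ| ^ α)
        (nhdsWithin 0 {θ : ℝ | θ ≠ 0}) (nhds C)) := by
  obtain ⟨hα1, hα2⟩ := hα
  have hpi := Real.pi_pos
  have hzero : pAlpha α 0 = 0 := by
    have hα0 : (α : ℂ) ≠ 0 := Complex.ofReal_ne_zero.mpr (by linarith)
    simp [pAlpha, gAlpha, Complex.zero_cpow hα0]
  have hposcase : ∀ θ : ℝ, 0 < θ → θ ≤ Real.pi → 0 ≤ pAlpha α θ := by
    intro θ h0 hπ
    rw [pAlpha_formula α h0 hπ]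
    have hcos : Real.cos ((θ - Real.pi) / 2 * α - θ) ≤ 0 := by
      have hx : Real.cos ((θ - Real.pi) / 2 * α - θ) =
          Real.cos (θ - (θ - Real.pi) / 2 * α) := by
        rw [← Real.cos_neg]; ring_nf
      rw [hx]
      apply Real.cos_nonpos_of_pi_div_two_le_of_le
      · nlinarith
      · nlinarith
    have hs : (0:ℝ) ≤ (2 * Real.sin (θ / 2)) ^ α := by
      apply Real.rpow_nonneg
      have := Real.sin_nonneg_of_nonneg_of_le_pi (x := θ/2) (by linarith) (by linarith)
      linarith
    nlinarith
  refine ⟨?_, ?_, pAlpha_neg α, ?_⟩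
  · intro θ
    rw [Complex.add_conj]
    simp
  · intro θ ⟨hl, hu⟩
    rcases lt_trichotomy θ 0 with h | h | h
    · have := hposcase (-θ) (by linarith) (by linarith)
      rwa [pAlpha_neg] at this
    · rw [h, hzero]
    · exact hposcase θ h hu
  · refine ⟨-2 * Real.cos (-Real.pi / 2 * α), ?_, ?_⟩
    · have h1 : Real.cos (-Real.pi / 2 * α) = Real.cos (Real.pi / 2 * α) := by
        rw [show -Real.pi / 2 * α = -(Real.pi / 2 * α) by ring, Real.cos_neg]
      rw [h1]
      have : Real.cos (Real.pi / 2 * α) < 0 := by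
        apply Real.cos_neg_of_pi_div_two_lt_of_lt <;> nlinarith
      linarith
    · have hset : {θ : ℝ | θ ≠ 0} = {(0:ℝ)}ᶜ := by ext; simp
      rw [hset, ← nhdsLT_sup_nhdsGT]
      refine Tendsto.sup ?_ (tendsto_right α ⟨hα1, hα2⟩)
      have hneg : Tendsto (fun θ : ℝ => -θ) (nhdsWithin (0:ℝ) (Set.Iio 0))
          (nhdsWithin (0:ℝ) (Set.Ioi 0)) := by
        apply tendsto_nhdsWithin_of_tendsto_nhds_of_eventually_within
        · simpa using (continuous_neg.tendsto (0:ℝ)).mono_left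
            (nhdsWithin_le_nhds (s := Set.Iio (0:ℝ)))
        · filter_upwards [self_mem_nhdsWithin] with θ (hθ : θ < 0)
          exact Set.mem_Ioi.mpr (by linarith)
      have := (tendsto_right α ⟨hα1, hα2⟩).comp hneg
      refine this.congr ?_
      intro θ
      simp [Function.comp, pAlpha_neg, abs_neg]
end
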